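/- In a bipartite graph G with bipartition (X,Y), suppose a,b,c,d ∈ X with (a,b) Γ (c,d), and at least one of (a,c), (c,b) is a relevant pair. Then (a,c) Γ (a,b) or (c,b) Γ (a,b). -/

import Mathlib

namespace CocompBigraph

variable {V : Type*}

/-- `side` is a bipartition of the simple graph `G`: edges only join the two sides. -/
def IsBipartition (G : SimpleGraph V) (side : V → Bool) : Prop :=
  ∀ u v, G.Adj u v → side u ≠ side v

/-- Two edges `xy`, `x'y'` (with `x, x'` on one side and `y, y'` on the other) are
independent: they are disjoint and neither `xy'` nor `x'y` is an edge. -/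
def Indep (G : SimpleGraph V) (x y x' y' : V) : Prop :=
  G.Adj x y ∧ G.Adj x' y' ∧ x ≠ x' ∧ y ≠ y' ∧ ¬ G.Adj x y' ∧ ¬ G.Adj x' y

/-- `w` is a walk of length `n` in `G` (vertices `w 0, …, w n`). -/
def IsWalk (G : SimpleGraph V) (n : ℕ) (w : ℕ → V) : Prop :=
  ∀ i < n, G.Adj (w i) (w (i+1))

/-- Two walks of the same length `n`, beginning on the same side, are congruent if
for each `i` their `i`-th edges are independent. -/
def CongWalks (G : SimpleGraph V) (side : V → Bool) (n : ℕ) (w w' : ℕ → V) : Prop :=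
  side (w 0) = side (w' 0) ∧
  IsWalk G n w ∧ IsWalk G n w' ∧
  ∀ i < n, Indep G (w i) (w (i+1)) (w' i) (w' (i+1))

/-- `(a,b) Γ (f,g)`: there are congruent walks from `a` to `f` and from `b` to `g`. -/
def Gamma (G : SimpleGraph V) (side : V → Bool) (a b f g : V) : Prop :=
  ∃ n, ∃ w w' : ℕ → V, CongWalks G side n w w' ∧
    w 0 = a ∧ w' 0 = b ∧ w n = f ∧ w' n = g

/-- A pair of distinct vertices `u, v` is invertible if there are congruent walks
from `u` to `v` and from `v` to `u`. -/
def InvertiblePair (G : SimpleGraph V) (side : V → Bool) (u v : V) : Prop :=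
  u ≠ v ∧ Gamma G side u v v u

/-- A pair `(a,b)` is relevant if its implication class contains at least two pairs. -/
def Relevant (G : SimpleGraph V) (side : V → Bool) (a b : V) : Prop :=
  ∃ f g, Gamma G side a b f g ∧ (f, g) ≠ (a, b)

/-- An orientation of the complement of `G`: every pair of distinct vertices on the
same side gets exactly one direction (cross pairs stay undirected). -/
def IsOrientation (side : V → Bool) (O : V → V → Prop) : Prop :=
  (∀ u v, O u v → side u = side v ∧ u ≠ v) ∧
  (∀ u v, u ≠ v → side u = side v → (O u v ↔ ¬ O v u))

/-- The orientation `O` is `T`-free: no two independent edges of the bipartite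
complement agree in `O`. -/
def TFree (G : SimpleGraph V) (side : V → Bool) (O : V → V → Prop) : Prop :=
  ∀ x y x' y', side x = side x' → side y = side y' → side x ≠ side y →
    x ≠ x' → y ≠ y' → ¬ G.Adj x y → ¬ G.Adj x' y' →
    G.Adj x y' → G.Adj x' y → ¬ (O x x' ∧ O y y')

/-- The relation `O` has no directed cycle. -/
def OAcyclic (O : V → V → Prop) : Prop :=
  ∀ (n : ℕ) (w : ℕ → V), 0 < n → (∀ i < n, O (w i) (w (i+1))) → w 0 ≠ w n

/-- `G` has an `S`-free pair of orderings: linear orders of the two sides such that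
no two independent edges cross. -/
def SFreePair (G : SimpleGraph V) (side : V → Bool) : Prop :=
  ∃ lt : V → V → Prop,
    (∀ u v, lt u v → side u = side v ∧ u ≠ v) ∧
    (∀ u v, u ≠ v → side u = side v → (lt u v ↔ ¬ lt v u)) ∧
    (∀ u v w, lt u v → lt v w → lt u w) ∧
    (∀ u v w z, side u ≠ side w → lt u v → lt w z →
      G.Adj u z → G.Adj v w → (G.Adj u w ∨ G.Adj v z))

/-- An edge-asteroid: `2k+1` distinct edges `x i — y i` such that for each `i` there
is a walk joining the edges `e (i+k)` and `e (i+k+1)` (including both endpoints of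
each) containing no vertex adjacent to either end of `e i`. -/
def EdgeAsteroid (G : SimpleGraph V) (k : ℕ) (x y : ZMod (2*k+1) → V) : Prop :=
  1 ≤ k ∧
  (∀ i, G.Adj (x i) (y i)) ∧
  (∀ i j : ZMod (2*k+1), i ≠ j → (x i, y i) ≠ (x j, y j)) ∧
  ∀ i : ZMod (2*k+1), ∃ n, ∃ w : ℕ → V, IsWalk G n w ∧ 1 ≤ n ∧
    ((w 0 = x (i+k) ∧ w 1 = y (i+k)) ∨ (w 0 = y (i+k) ∧ w 1 = x (i+k))) ∧
    ((w (n-1) = y (i+k+1) ∧ w n = x (i+k+1)) ∨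
      (w (n-1) = x (i+k+1) ∧ w n = y (i+k+1))) ∧
    ∀ j ≤ n, ¬ G.Adj (w j) (x i) ∧ ¬ G.Adj (w j) (y i)

/-- An asteroid in a graph `H`: `2k+1` distinct vertices such that for each `i` there
is a path joining `v (i+k)` and `v (i+k+1)` none of whose vertices is a neighbour
of `v i`. -/
def Asteroid {W : Type*} (H : SimpleGraph W) (k : ℕ) (v : ZMod (2*k+1) → W) : Prop :=
  1 ≤ k ∧ Function.Injective v ∧
  ∀ i : ZMod (2*k+1), ∃ n, ∃ w : ℕ → W, IsWalk H n w ∧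
    w 0 = v (i+k) ∧ w n = v (i+(k+1)) ∧
    (∀ a ≤ n, ∀ b ≤ n, w a = w b → a = b) ∧
    ∀ j ≤ n, ¬ H.Adj (w j) (v i)

/-- The independence graph `I(G)`: vertices are the edges of `G` (oriented from side
`true` to side `false`), adjacent iff independent. -/
def IndepGraph (G : SimpleGraph V) (side : V → Bool) :
    SimpleGraph {p : V × V // G.Adj p.1 p.2 ∧ side p.1 = true} where
  Adj e f := Indep G e.1.1 e.1.2 f.1.1 f.1.2
  symm := by
    constructor
    rintro e f ⟨h1, h2, h3, h4, h5, h6⟩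
    exact ⟨h2, h1, h3.symm, h4.symm, h6, h5⟩
  loopless := by
    constructor
    rintro e ⟨_, _, h3, _⟩
    exact h3 rfl

/-- A graph is a comparability graph iff it has a transitive orientation. -/
def HasTransitiveOrientation {W : Type*} (H : SimpleGraph W) : Prop :=
  ∃ r : W → W → Prop,
    (∀ u v, r u v → H.Adj u v) ∧
    (∀ u v, H.Adj u v → (r u v ↔ ¬ r v u)) ∧
    (∀ u v w, r u v → r v w → r u w)

/-- The cycle `C_n` on vertex set `ZMod n`. -/
def cycleGraph (n : ℕ) : SimpleGraph (ZMod n) where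
  Adj i j := i ≠ j ∧ (j = i + 1 ∨ i = j + 1)
  symm := by constructor; rintro i j ⟨h, h'⟩; exact ⟨h.symm, h'.symm⟩
  loopless := by constructor; rintro i ⟨h, _⟩; exact h rfl

/-- `G` contains an induced cycle of length `n`. -/
def HasInducedCycle (G : SimpleGraph V) (n : ℕ) : Prop :=
  ∃ f : ZMod n → V, Function.Injective f ∧
    ∀ i j, G.Adj (f i) (f j) ↔ (cycleGraph n).Adj i j

/-- Adjacency of the auxiliary graph `G⁺` on ordered pairs:
`(u,v)` is adjacent to `(v,u)` and to every `(z,w)` such that `uw` and `vz` are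
independent edges of `G`. -/
def AuxAdj (G : SimpleGraph V) (p q : V × V) : Prop :=
  (q.1 = p.2 ∧ q.2 = p.1) ∨
  (G.Adj p.1 q.2 ∧ G.Adj p.2 q.1 ∧ p.1 ≠ p.2 ∧ q.1 ≠ q.2 ∧
    ¬ G.Adj p.1 q.1 ∧ ¬ G.Adj p.2 q.2)

/-- The auxiliary graph `G⁺`, on the set `F` of ordered pairs of distinct same-side
vertices, is bipartite (i.e. properly 2-colourable). -/
def AuxBipartite (G : SimpleGraph V) (side : V → Bool) : Prop :=
  ∃ c : {p : V × V // p.1 ≠ p.2 ∧ side p.1 = side p.2} → Bool,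
    ∀ p q, AuxAdj G p.1 q.1 → c p ≠ c q

/-- `G` is an interval containment bigraph. -/
def IntervalContainment (G : SimpleGraph V) (side : V → Bool) : Prop :=
  ∃ l r : V → ℝ, (∀ v, l v ≤ r v) ∧
    ∀ x y, side x = true → side y = false →
      (G.Adj x y ↔ (l x ≤ l y ∧ r y ≤ r x))

/-!
Follow the congruent walks from `(a, b)` to `(c, d)` two steps at a time, through pairs `(s, t)`
with `(s, t) Γ (a, b)`, keeping `(s, c) Γ (a, c)`, `(c, t) Γ (c, b)`, `s ≠ c ≠ t` and the
relevance of `(s, c)` or `(c, t)`. Relevance of `(s, c)` provides independent edges `s p`, `c q`;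
comparing `p`, `q` and `c` with the next steps `s z s'`, `t z' t'` of the walks either exhibits
`(s, c) Γ (s, t)` or `(c, t) Γ (s, t)` by an explicit chain of independent edge pairs, or moves
the whole invariant on to `(s', t')`. As the walk ends in `c`, the invariant cannot survive to
the end.
-/

section TriangleLemma

variable {G : SimpleGraph V} {side : V → Bool}

attribute [local grind] Indep
attribute [local grind →] SimpleGraph.Adj.symm

theorem IsBipartition.side_eq_of_adj (hbip : IsBipartition G side) {x x' y y' : V}
    (hx : G.Adj x x') (hy : G.Adj y y') (h : side x = side y) : side x' = side y' := by
  rw [Bool.eq_not_iff.2 (hbip _ _ hx).symm, Bool.eq_not_iff.2 (hbip _ _ hy).symm, h]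

theorem Indep.symm {x y x' y' : V} (h : Indep G x y x' y') : Indep G x' y' x y :=
  ⟨h.2.1, h.1, h.2.2.1.symm, h.2.2.2.1.symm, h.2.2.2.2.2, h.2.2.2.2.1⟩

theorem Indep.flip {x y x' y' : V} (h : Indep G x y x' y') : Indep G y x y' x' :=
  ⟨h.1.symm, h.2.1.symm, h.2.2.2.1, h.2.2.1,
    fun h' => h.2.2.2.2.2 h'.symm, fun h' => h.2.2.2.2.1 h'.symm⟩

theorem Gamma.refl {x y : V} (h : side x = side y) : Gamma G side x y x y :=
  ⟨0, fun _ => x, fun _ => y, ⟨h, nofun, nofun, nofun⟩, rfl, rfl, rfl, rfl⟩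

theorem Gamma.snoc {x y u v u' v' : V} (h : Gamma G side x y u v)
    (h' : Indep G u u' v v') : Gamma G side x y u' v' := by
  obtain ⟨m, w, w', ⟨hs, hw, hw', hi⟩, rfl, rfl, rfl, rfl⟩ := h
  have step : ∀ (P : V → V → V → V → Prop),
      (∀ i < m, P (w i) (w (i + 1)) (w' i) (w' (i + 1))) → P (w m) u' (w' m) v' →
      ∀ i < m + 1, P (if i ≤ m then w i else u') (if i + 1 ≤ m then w (i + 1) else u')
        (if i ≤ m then w' i else v') (if i + 1 ≤ m then w' (i + 1) else v') := by
    intro P hold hnew i hi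
    rcases Nat.lt_succ_iff_lt_or_eq.mp hi with hi | rfl
    · simpa [hi.le, Nat.succ_le_of_lt hi] using hold i hi
    · simpa using hnew
  exact ⟨m + 1, fun i => if i ≤ m then w i else u', fun i => if i ≤ m then w' i else v',
    ⟨by simpa using hs, step (fun a b _ _ => G.Adj a b) hw h'.1,
      step (fun _ _ a b => G.Adj a b) hw' h'.2.1, step (Indep G) hi h'⟩,
    by simp, by simp, by simp, by simp⟩

theorem Gamma.trans {x y u v f g : V} (h₁ : Gamma G side x y u v)
    (h₂ : Gamma G side u v f g) : Gamma G side x y f g := by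
  obtain ⟨n, w, w', ⟨-, -, -, hi⟩, rfl, rfl, rfl, rfl⟩ := h₂
  have : ∀ k ≤ n, Gamma G side x y (w k) (w' k) := by
    intro k
    induction k with
    | zero => exact fun _ => h₁
    | succ k ih => exact fun hk => (ih (by omega)).snoc (hi k (by omega))
  exact this n le_rfl

theorem Gamma.swap {x y u v : V} (h : Gamma G side x y u v) : Gamma G side y x v u := by
  obtain ⟨n, w, w', ⟨hs, hw, hw', hi⟩, rfl, rfl, rfl, rfl⟩ := h
  exact ⟨n, w', w, ⟨hs.symm, hw', hw, fun i hi' => (hi i hi').symm⟩, rfl, rfl, rfl, rfl⟩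

theorem Gamma.ne {x y u v : V} (h : Gamma G side x y u v) (hxy : x ≠ y) : u ≠ v := by
  obtain ⟨n, w, w', ⟨-, -, -, hi⟩, rfl, rfl, rfl, rfl⟩ := h
  cases n with
  | zero => exact hxy
  | succ n => exact (hi n (by omega)).2.2.2.1

theorem relevant_iff_exists_indep {x y : V} (h : side x = side y) :
    Relevant G side x y ↔ ∃ p q, Indep G x p y q := by
  constructor
  · rintro ⟨f, g, ⟨n, w, w', ⟨-, -, -, hi⟩, rfl, rfl, rfl, rfl⟩, hne⟩
    cases n with
    | zero => exact absurd rfl hne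
    | succ n => exact ⟨w 1, w' 1, hi 0 (by omega)⟩
  · rintro ⟨p, q, hpq⟩
    exact ⟨p, q, (Gamma.refl h).snoc hpq, fun he => hpq.1.ne (congrArg Prod.fst he).symm⟩

theorem Relevant.swap {x y : V} (h : Relevant G side x y) : Relevant G side y x :=
  let ⟨f, g, hΓ, hne⟩ := h
  ⟨g, f, hΓ.swap, fun he => hne (congrArg Prod.swap he)⟩

theorem CongWalks.drop_two (hbip : IsBipartition G side) {n : ℕ} {w w' : ℕ → V}
    (h : CongWalks G side (n + 2) w w') :
    CongWalks G side n (fun i => w (i + 2)) (fun i => w' (i + 2)) := by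
  obtain ⟨hs, hw, hw', hi⟩ := h
  refine ⟨?_, fun i hi' => hw (i + 2) (by omega), fun i hi' => hw' (i + 2) (by omega),
    fun i hi' => hi (i + 2) (by omega)⟩
  exact hbip.side_eq_of_adj (hw 1 (by omega)) (hw' 1 (by omega))
    (hbip.side_eq_of_adj (hw 0 (by omega)) (hw' 0 (by omega)) hs)

theorem triangle_step_of_adj_of_adj {s t c z z' s' t' p : V}
    (hs : side s = side c) (ht : side t = side c) (hs' : side s' = side c)
    (h₁ : Indep G s z t z') (h₂ : Indep G z s' z' t') (hsc : s ≠ c) (htc : t ≠ c)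
    (hcz : G.Adj c z) (hcz' : G.Adj c z') (hsp : G.Adj s p) (hcp : ¬ G.Adj c p) :
    Gamma G side s c s t ∨ Gamma G side c t s t ∨
      (Gamma G side s c s' c ∧ Gamma G side c t c t' ∧
        (Relevant G side s' c ∨ Relevant G side c t')) := by
  have e₁ : Indep G s p c z' := by grind
  by_cases hpt : G.Adj p t
  swap
  · have e₂ : Indep G p s z' t := by grind
    exact Or.inl ((Gamma.refl hs).snoc e₁ |>.snoc e₂)
  by_cases hpt' : G.Adj p t'
  swap
  · have e₂ : Indep G p s z' t' := by grind
    have e₃ : Indep G s z t' z' := by grind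
    exact Or.inl ((Gamma.refl hs).snoc e₁ |>.snoc e₂ |>.snoc e₃ |>.snoc h₁.flip)
  have e₂ : Indep G c z t p := by grind
  by_cases hps' : G.Adj p s'
  swap
  · have e₃ : Indep G z s' p t := by grind
    have e₄ : Indep G s' z t z' := by grind
    exact Or.inr <| Or.inl
      ((Gamma.refl ht.symm).snoc e₂ |>.snoc e₃ |>.snoc e₄ |>.snoc h₁.flip)
  have e₃ : Indep G p s' z' c := by grind
  have e₄ : Indep G z c p t' := by grind
  have e₅ : Indep G s' p c z' := by grind
  exact Or.inr <| Or.inr ⟨(Gamma.refl hs).snoc e₁ |>.snoc e₃,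
    (Gamma.refl ht.symm).snoc e₂ |>.snoc e₄,
    Or.inl ((relevant_iff_exists_indep hs').2 ⟨_, _, e₅⟩)⟩

theorem triangle_step_of_not_adj_of_not_adj {s t c z z' s' t' q : V}
    (hs : side s = side c) (ht : side t = side c) (hs' : side s' = side c)
    (h₁ : Indep G s z t z') (h₂ : Indep G z s' z' t') (hsc : s ≠ c) (htc : t ≠ c)
    (hcz : ¬ G.Adj c z) (hcz' : ¬ G.Adj c z') (hcq : G.Adj c q) (hsq : ¬ G.Adj s q) :
    Gamma G side s c s t ∨ Gamma G side c t s t ∨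
      (Gamma G side s c s' c ∧ Gamma G side c t c t' ∧
        (Relevant G side s' c ∨ Relevant G side c t')) := by
  have e₁ : Indep G s z c q := by grind
  by_cases hqt : G.Adj q t
  · have e₂ : Indep G z s q t := by grind
    exact Or.inl ((Gamma.refl hs).snoc e₁ |>.snoc e₂)
  have e₂ : Indep G c q t z' := by grind
  by_cases hqs' : G.Adj q s'
  · have e₃ : Indep G q s' z' t := by grind
    have e₄ : Indep G s' z t z' := by grind
    exact Or.inr <| Or.inl
      ((Gamma.refl ht.symm).snoc e₂ |>.snoc e₃ |>.snoc e₄ |>.snoc h₁.flip)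
  have e₃ : Indep G z s' q c := by grind
  have e₄ : Indep G s' z c q := by grind
  by_cases hqt' : G.Adj q t'
  · have e₅ : Indep G z s' q t' := by grind
    exact Or.inl ((Gamma.refl hs).snoc e₁ |>.snoc e₃ |>.snoc e₄ |>.snoc e₅ |>.snoc h₂.flip
      |>.snoc h₁.flip)
  have e₅ : Indep G q c z' t' := by grind
  exact Or.inr <| Or.inr ⟨(Gamma.refl hs).snoc e₁ |>.snoc e₃,
    (Gamma.refl ht.symm).snoc e₂ |>.snoc e₅,
    Or.inl ((relevant_iff_exists_indep hs').2 ⟨_, _, e₄⟩)⟩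

theorem triangle_step_of_relevant {s t c z z' s' t' : V}
    (hs : side s = side c) (ht : side t = side c) (hs' : side s' = side c)
    (h₁ : Indep G s z t z') (h₂ : Indep G z s' z' t') (hsc : s ≠ c) (htc : t ≠ c)
    (hrel : Relevant G side s c) :
    Gamma G side s c s t ∨ Gamma G side c t s t ∨
      (Gamma G side s c s' c ∧ Gamma G side c t c t' ∧
        (Relevant G side s' c ∨ Relevant G side c t')) := by
  obtain ⟨p, q, hsp, hcq, -, -, hsq, hcp⟩ := (relevant_iff_exists_indep hs).1 hrel
  by_cases hcz : G.Adj c z <;> by_cases hcz' : G.Adj c z'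
  · exact triangle_step_of_adj_of_adj hs ht hs' h₁ h₂ hsc htc hcz hcz' hsp hcp
  · have e : Indep G c z t z' := by grind
    exact Or.inr <| Or.inl ((Gamma.refl ht.symm).snoc e |>.snoc h₁.flip)
  · have e : Indep G s z c z' := by grind
    exact Or.inl ((Gamma.refl hs).snoc e |>.snoc h₁.flip)
  · exact triangle_step_of_not_adj_of_not_adj hs ht hs' h₁ h₂ hsc htc hcz hcz' hcq hsq

theorem triangle_step {s t c z z' s' t' : V}
    (hs : side s = side c) (ht : side t = side c) (hs' : side s' = side c)
    (ht' : side t' = side c)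
    (h₁ : Indep G s z t z') (h₂ : Indep G z s' z' t') (hsc : s ≠ c) (htc : t ≠ c)
    (hrel : Relevant G side s c ∨ Relevant G side c t) :
    Gamma G side s c s t ∨ Gamma G side c t s t ∨
      (Gamma G side s c s' c ∧ Gamma G side c t c t' ∧
        (Relevant G side s' c ∨ Relevant G side c t')) := by
  rcases hrel with hrel | hrel
  · exact triangle_step_of_relevant hs ht hs' h₁ h₂ hsc htc hrel
  rcases triangle_step_of_relevant ht hs ht' h₁.symm h₂.symm htc hsc hrel.swap with
    h | h | ⟨hΓt, hΓs, hrel'⟩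
  · exact Or.inr (Or.inl h.swap)
  · exact Or.inl h.swap
  · exact Or.inr (Or.inr ⟨hΓs.swap, hΓt.swap, hrel'.symm.imp Relevant.swap Relevant.swap⟩)

theorem triangle_of_congWalks (hbip : IsBipartition G side) {c : V} (n : ℕ) :
    ∀ {s t : V} {w w' : ℕ → V}, CongWalks G side n w w' → w 0 = s → w' 0 = t → w n = c →
      side s = side c → s ≠ c → t ≠ c → (Relevant G side s c ∨ Relevant G side c t) →
      Gamma G side s c s t ∨ Gamma G side c t s t := by
  induction n using Nat.twoStepInduction with
  | zero =>
    rintro s t w w' - rfl - hn - hsc -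
    exact absurd hn hsc
  | one =>
    rintro s t w w' hw rfl - rfl hs -
    exact absurd hs (hbip _ _ (hw.2.1 0 one_pos))
  | more n ih _ =>
    rintro s t w w' hw rfl rfl hn hs hsc htc hrel
    have h₁ := hw.2.2.2 0 (by omega)
    have h₂ := hw.2.2.2 1 (by omega)
    have ht : side (w' 0) = side c := hw.1.symm.trans hs
    have hs' : side (w 2) = side c := (hbip.side_eq_of_adj h₁.1.symm h₂.1 rfl).symm.trans hs
    have ht' : side (w' 2) = side c :=
      (hbip.side_eq_of_adj h₁.2.1.symm h₂.2.1 rfl).symm.trans ht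
    rcases triangle_step hs ht hs' ht' h₁ h₂ hsc htc hrel with h | h | ⟨hΓs, hΓt, hrel'⟩
    · exact Or.inl h
    · exact Or.inr h
    have hback : Gamma G side (w 2) (w' 2) (w 0) (w' 0) :=
      (Gamma.refl (hs'.trans ht'.symm)).snoc h₂.flip |>.snoc h₁.flip
    rcases ih (hw.drop_two hbip) rfl rfl hn hs' (hΓs.ne hsc) (hΓt.ne htc.symm).symm hrel'
      with h | h
    · exact Or.inl ((hΓs.trans h).trans hback)
    · exact Or.inr ((hΓt.trans h).trans hback)

end TriangleLemma

theorem stmt_11_general (G : SimpleGraph V) (side : V → Bool) (hbip : IsBipartition G side)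
    (a b c d : V) (ha : side a = true) (hc : side c = true)
    (h : Gamma G side a b c d)
    (hrel : Relevant G side a c ∨ Relevant G side c b) :
    Gamma G side a c a b ∨ Gamma G side c b a b := by
  obtain ⟨n, w, w', hw, hw0, hw0', hn, -⟩ := h
  have hab : side a = side b := hw0 ▸ hw0' ▸ hw.1
  by_cases hca : c = a
  · subst hca
    exact Or.inr (Gamma.refl hab)
  by_cases hcb : c = b
  · subst hcb
    exact Or.inl (Gamma.refl hab)
  exact triangle_of_congWalks hbip n hw hw0 hw0' hn (ha.trans hc.symm) (Ne.symm hca)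
    (Ne.symm hcb) hrel

/-- if `a, b, c, d ∈ X` with `(a,b) Γ (c,d)` and one of `(a,c)`,
`(c,b)` is relevant, then `(a,c) Γ (a,b)` or `(c,b) Γ (a,b)`. -/
theorem stmt_11 (G : SimpleGraph V) (side : V → Bool) (hbip : IsBipartition G side)
    (a b c d : V) (ha : side a = true) (hb : side b = true)
    (hc : side c = true) (hd : side d = true)
    (hab : a ≠ b) (hcd : c ≠ d)
    (h : Gamma G side a b c d)
    (hrel : Relevant G side a c ∨ Relevant G side c b) :
    Gamma G side a c a b ∨ Gamma G side c b a b :=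
  stmt_11_general G side hbip a b c d ha hc h hrel

end CocompBigraph
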